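/- arXiv:2402.18983 — 4 statements merged into one kernel-verified Lean document; each statement's English description precedes it below -/
import Mathlib

section
/- Define the pre-critical energy 𝓘^pre(a,c) = 3/8 + a²/8 + 3/(8a²q⁴) - 5/(8q²) + (3/4 + a²/8)a²q² - 3a⁴q⁴/8 + log(2aq) + 2c·log(2aq²) + log((1+a²q²-2a²q⁴)^{c²}/(1+a²q²)^{(c+1)²}), where q = q(a) solves the cubic constraint. Then the derivative with respect to a satisfies d/da 𝓘^pre(a,c) = 1/(2a) + a - 1/(aq²) - a³q⁴/2 = -((1-a²q²)(2-q²-a²q⁴))/(2aq²). -/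
/-- The pre-critical energy `𝓘^pre(a,c)` as a function of `a`, `q = q(a)`. -/
noncomputable def Ipre (c a q : ℝ) : ℝ :=
  3/8 + a ^ 2 / 8 + 3 / (8 * a ^ 2 * q ^ 4) - 5 / (8 * q ^ 2)
    + (3/4 + a ^ 2 / 8) * a ^ 2 * q ^ 2 - 3 * a ^ 4 * q ^ 4 / 8
    + Real.log (2 * a * q) + 2 * c * Real.log (2 * a * q ^ 2)
    + Real.log ((1 + a ^ 2 * q ^ 2 - 2 * a ^ 2 * q ^ 4) ^ (c ^ 2 : ℝ)
        / (1 + a ^ 2 * q ^ 2) ^ (((c + 1) ^ 2 : ℝ)))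

set_option maxHeartbeats 4000000 in
/-- Derivative of the pre-critical energy:
`d/da 𝓘^pre(a,c) = 1/(2a) + a - 1/(aq²) - a³q⁴/2 = -((1-a²q²)(2-q²-a²q⁴))/(2aq²)`. -/
theorem deriv_Ipre (c : ℝ) (hc : 0 < c) (q : ℝ → ℝ) (a q' : ℝ)
    (s : Set ℝ) (hs : IsOpen s) (has : a ∈ s)
    (hpos : ∀ x ∈ s, 0 < x ∧ 0 < q x ∧ q x < 1)
    (hcubic : ∀ x ∈ s,
      q x ^ 6 - ((x ^ 2 + 4 * c + 2) / (2 * x ^ 2)) * q x ^ 4 + 1 / (2 * x ^ 4) = 0)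
    (hq : HasDerivAt q q' a)
    (hne : a ^ 4 * q a ^ 6 ≠ 1)
    (hlog : ∀ x ∈ s, 0 < 1 + x ^ 2 * q x ^ 2 - 2 * x ^ 2 * q x ^ 4) :
    HasDerivAt (fun x => Ipre c x (q x))
        (1 / (2 * a) + a - 1 / (a * q a ^ 2) - a ^ 3 * q a ^ 4 / 2) a ∧
      1 / (2 * a) + a - 1 / (a * q a ^ 2) - a ^ 3 * q a ^ 4 / 2
        = -((1 - a ^ 2 * q a ^ 2) * (2 - q a ^ 2 - a ^ 2 * q a ^ 4)) / (2 * a * q a ^ 2) := by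
  obtain ⟨ha, hP, hP1⟩ := hpos a has
  have ha0 : a ≠ 0 := ha.ne'
  have hq0 : q a ≠ 0 := hP.ne'
  have hane : a ^ 4 * q a ^ 6 - 1 ≠ 0 := sub_ne_zero.mpr hne
  have h2a2 : (2:ℝ) * a ^ 2 ≠ 0 := by positivity
  have h2a4 : (2:ℝ) * a ^ 4 ≠ 0 := by positivity
  -- q' relation from differentiating the (constant zero) cubic constraint
  have hFd := ((hq.pow 6).sub
      (((((hasDerivAt_pow 2 a).add_const (4*c)).add_const 2).div
        ((hasDerivAt_pow 2 a).const_mul 2) h2a2).mul (hq.pow 4))).add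
      ((hasDerivAt_const a (1:ℝ)).div ((hasDerivAt_pow 4 a).const_mul 2) h2a4)
  have hz : (fun x => q x ^ 6 - ((x ^ 2 + 4 * c + 2) / (2 * x ^ 2)) * q x ^ 4 + 1 / (2 * x ^ 4))
      =ᶠ[nhds a] (fun _ => (0:ℝ)) :=
    Filter.eventuallyEq_of_mem (hs.mem_nhds has) hcubic
  have hM0 := hFd.unique ((hasDerivAt_const a (0:ℝ)).congr_of_eventuallyEq hz)
  have hc0 : 4*a^2*c*(q a)^4 = 2*a^4*(q a)^6 - a^4*(q a)^4 - 2*a^2*(q a)^4 + 1 := by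
    have h := hcubic a has
    field_simp at h
    have h2 : (2*a^2) * (4*a^2*c*(q a)^4)
        = (2*a^2) * (2*a^4*(q a)^6 - a^4*(q a)^4 - 2*a^2*(q a)^4 + 1) := by
      linear_combination (-2*a^2)*h
    exact mul_left_cancel₀ h2a2 h2
  have hD0 : 2*a*(a^4*(q a)^6 - 1)*q' = (q a)*(1 + a^4*(q a)^4 - 2*a^4*(q a)^6) := by
    have hM1 : 24*a^8*(q a)^5*q' + 16*a^5*c*(q a)^4 + 8*a^5*(q a)^4
        - 8*a^6*(a^2+4*c+2)*(q a)^3*q' - 8*a^3 = 0 := by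
      linear_combination (norm := skip) (4*a^8)*hM0
      simp only [Pi.add_apply, Pi.sub_apply, Pi.mul_apply, Pi.div_apply, Pi.pow_apply]
      push_cast
      field_simp
      ring
    have h2 : a^9 * (2*a*(a^4*(q a)^6 - 1)*q')
        = a^9 * ((q a)*(1 + a^4*(q a)^4 - 2*a^4*(q a)^6)) := by
      linear_combination (a^6*q a/4)*hM1 - (a^9*q a - 2*a^10*q')*hc0
    exact mul_left_cancel₀ (pow_ne_zero 9 ha0) h2
  have hD : q' = (q a)*(1 + a^4*(q a)^4 - 2*a^4*(q a)^6)/(2*a*(a^4*(q a)^6 - 1)) := by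
    rw [eq_div_iff (mul_ne_zero (mul_ne_zero two_ne_zero ha0) hane)]
    linear_combination hD0
  have hcval : c = (2*a^4*(q a)^6 - a^4*(q a)^4 - 2*a^2*(q a)^4 + 1)/(4*a^2*(q a)^4) := by
    have h4a : (4:ℝ)*a^2*(q a)^4 ≠ 0 :=
      mul_ne_zero (mul_ne_zero (by norm_num) (pow_ne_zero 2 ha0)) (pow_ne_zero 4 hq0)
    rw [eq_div_iff h4a]
    linear_combination hc0
  -- nonvanishing facts
  have hu : 0 < 1 + a ^ 2 * q a ^ 2 - 2 * a ^ 2 * q a ^ 4 := hlog a has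
  have hv : 0 < 1 + a ^ 2 * q a ^ 2 := by positivity
  have hden1 : (8:ℝ) * a ^ 2 * q a ^ 4 ≠ 0 :=
    mul_ne_zero (mul_ne_zero (by norm_num) (pow_ne_zero 2 ha0)) (pow_ne_zero 4 hq0)
  have hden2 : (8:ℝ) * q a ^ 2 ≠ 0 := mul_ne_zero (by norm_num) (pow_ne_zero 2 hq0)
  have h2aq : (2:ℝ) * a * q a ≠ 0 := mul_ne_zero (mul_ne_zero two_ne_zero ha0) hq0
  have h2aq2 : (2:ℝ) * a * q a ^ 2 ≠ 0 :=
    mul_ne_zero (mul_ne_zero two_ne_zero ha0) (pow_ne_zero 2 hq0)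
  -- derivative of the log-split version of the energy
  have h1 := hasDerivAt_const a ((3:ℝ)/8)
  have h2 := (hasDerivAt_pow 2 a).div_const (8:ℝ)
  have h3 := (hasDerivAt_const a (3:ℝ)).div
    (((hasDerivAt_pow 2 a).const_mul (8:ℝ)).mul (hq.pow 4)) hden1
  have h4 := (hasDerivAt_const a (5:ℝ)).div ((hq.pow 2).const_mul (8:ℝ)) hden2
  have h5 := (((hasDerivAt_const a ((3:ℝ)/4)).add
      ((hasDerivAt_pow 2 a).div_const (8:ℝ))).mul (hasDerivAt_pow 2 a)).mul (hq.pow 2)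
  have h6 := (((hasDerivAt_pow 4 a).const_mul (3:ℝ)).mul (hq.pow 4)).div_const (8:ℝ)
  have h7 := (((hasDerivAt_id a).const_mul (2:ℝ)).mul hq).log h2aq
  have h8 := ((((hasDerivAt_id a).const_mul (2:ℝ)).mul (hq.pow 2)).log h2aq2).const_mul (2*c)
  have h9 := ((((hasDerivAt_const a (1:ℝ)).add ((hasDerivAt_pow 2 a).mul (hq.pow 2))).sub
      (((hasDerivAt_pow 2 a).const_mul (2:ℝ)).mul (hq.pow 4))).log hu.ne').const_mul (c^2)
  have h10 := (((hasDerivAt_const a (1:ℝ)).add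
      ((hasDerivAt_pow 2 a).mul (hq.pow 2))).log hv.ne').const_mul ((c+1)^2)
  have hG := ((((((((h1.add h2).add h3).sub h4).add h5).sub h6).add h7).add h8).add h9).sub h10
  -- the energy agrees with the log-split version near `a`
  have hg_eq : Set.EqOn (fun x => Ipre c x (q x))
      (fun x => 3/8 + x ^ 2 / 8 + 3 / (8 * x ^ 2 * q x ^ 4) - 5 / (8 * q x ^ 2)
        + (3/4 + x ^ 2 / 8) * x ^ 2 * q x ^ 2 - 3 * x ^ 4 * q x ^ 4 / 8
        + Real.log (2 * x * q x) + 2 * c * Real.log (2 * x * q x ^ 2)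
        + c ^ 2 * Real.log (1 + x ^ 2 * q x ^ 2 - 2 * x ^ 2 * q x ^ 4)
        - (c + 1) ^ 2 * Real.log (1 + x ^ 2 * q x ^ 2)) s := by
    intro x hx
    obtain ⟨hx0, hqx, _⟩ := hpos x hx
    have hux := hlog x hx
    have hvx : 0 < 1 + x ^ 2 * q x ^ 2 := by positivity
    simp only [Ipre]
    rw [Real.log_div (Real.rpow_pos_of_pos hux _).ne' (Real.rpow_pos_of_pos hvx _).ne',
      Real.log_rpow hux, Real.log_rpow hvx]
    ring
  have hEv : (fun x => Ipre c x (q x)) =ᶠ[nhds a]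
      (fun x => 3/8 + x ^ 2 / 8 + 3 / (8 * x ^ 2 * q x ^ 4) - 5 / (8 * q x ^ 2)
        + (3/4 + x ^ 2 / 8) * x ^ 2 * q x ^ 2 - 3 * x ^ 4 * q x ^ 4 / 8
        + Real.log (2 * x * q x) + 2 * c * Real.log (2 * x * q x ^ 2)
        + c ^ 2 * Real.log (1 + x ^ 2 * q x ^ 2 - 2 * x ^ 2 * q x ^ 4)
        - (c + 1) ^ 2 * Real.log (1 + x ^ 2 * q x ^ 2)) :=
    Filter.eventuallyEq_of_mem (hs.mem_nhds has) hg_eq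
  have hIG := hG.congr_of_eventuallyEq hEv
  constructor
  · refine hIG.congr_deriv ?_
    rw [hcval, hD]
    push_cast
    simp only [Pi.add_apply, Pi.sub_apply, Pi.mul_apply, Pi.div_apply, Pi.pow_apply, id]
    field_simp
    ring
  · field_simp
    ring
end

section
/- In the pre-critical regime, Re g(a) = a²q²/2 - 1/2 + log((1+a²q²)/(2aq²)) + c·log((1+a²q²)/(1+a²q²-2a²q⁴)), and its derivative with respect to a (using the constraint on q(a)) simplifies to d/da Re g(a) = aq². -/
set_option maxHeartbeats 1000000


/-- In the pre-critical regime, with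
`G(a) = a²q²/2 - 1/2 + log((1+a²q²)/(2aq²)) + c log((1+a²q²)/(1+a²q²-2a²q⁴))`
(which equals `Re g(a)`), one has `G'(a) = a q(a)²` under the cubic constraint on `q`. -/
theorem deriv_re_g (c : ℝ) (hc : 0 < c) (q : ℝ → ℝ) (a q' : ℝ)
    (ha : Real.sqrt (c + 1) - Real.sqrt c < a)
    (s : Set ℝ) (hs : IsOpen s) (has : a ∈ s)
    (hpos : ∀ x ∈ s, 0 < x ∧ 0 < q x ∧ q x < 1)
    (hcubic : ∀ x ∈ s,
      q x ^ 6 - ((x ^ 2 + 4 * c + 2) / (2 * x ^ 2)) * q x ^ 4 + 1 / (2 * x ^ 4) = 0)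
    (hq : HasDerivAt q q' a)
    (hne : a ^ 4 * q a ^ 6 ≠ 1)
    (hlog : ∀ x ∈ s, 0 < 1 + x ^ 2 * q x ^ 2 - 2 * x ^ 2 * q x ^ 4) :
    HasDerivAt (fun x => x ^ 2 * q x ^ 2 / 2 - 1/2
        + Real.log ((1 + x ^ 2 * q x ^ 2) / (2 * x * q x ^ 2))
        + c * Real.log ((1 + x ^ 2 * q x ^ 2) / (1 + x ^ 2 * q x ^ 2 - 2 * x ^ 2 * q x ^ 4)))
      (a * q a ^ 2) a := by
  obtain ⟨hA, hQ, hQ1⟩ := hpos a has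
  have hW := hlog a has
  have hA0 : a ≠ 0 := ne_of_gt hA
  have hQ0 : q a ≠ 0 := ne_of_gt hQ
  have h1u : (0:ℝ) < 1 + a ^ 2 * q a ^ 2 := by positivity
  -- the cubic constraint at `a`, in polynomial form
  have hP : 2 * a ^ 4 * q a ^ 6 - a ^ 2 * (a ^ 2 + 4 * c + 2) * q a ^ 4 + 1 = 0 := by
    have h := hcubic a has
    have h2 : 2 * a ^ 4 * q a ^ 6 - a ^ 2 * (a ^ 2 + 4 * c + 2) * q a ^ 4 + 1
        = 2 * a ^ 4 * (q a ^ 6 - ((a ^ 2 + 4 * c + 2) / (2 * a ^ 2)) * q a ^ 4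
            + 1 / (2 * a ^ 4)) := by
      field_simp
    rw [h2, h, mul_zero]
  -- express c via the constraint
  have hc2 : c = (2 * a ^ 4 * q a ^ 6 - a ^ 4 * q a ^ 4 - 2 * a ^ 2 * q a ^ 4 + 1)
      / (4 * a ^ 2 * q a ^ 4) := by
    rw [eq_div_iff (by positivity)]
    linear_combination -hP
  -- basic derivative facts
  have hx2 : HasDerivAt (fun x : ℝ => x ^ 2) (2 * a) a := by
    simpa using hasDerivAt_pow 2 a
  have hx4 : HasDerivAt (fun x : ℝ => x ^ 4) (4 * a ^ 3) a := by
    simpa using hasDerivAt_pow 4 a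
  have hq2 : HasDerivAt (fun x => q x ^ 2) (2 * q a * q') a := by
    simpa using hq.fun_pow 2
  have hq4 : HasDerivAt (fun x => q x ^ 4) (4 * q a ^ 3 * q') a := by
    simpa using hq.fun_pow 4
  have hq6 : HasDerivAt (fun x => q x ^ 6) (6 * q a ^ 5 * q') a := by
    simpa using hq.fun_pow 6
  -- differentiate the (polynomial form of the) constraint; it vanishes near a
  have hFeq : (fun x => 2 * x ^ 4 * q x ^ 6 - x ^ 2 * (x ^ 2 + (4 * c + 2)) * q x ^ 4 + 1)
      =ᶠ[nhds a] (fun _ => (0:ℝ)) := by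
    filter_upwards [hs.mem_nhds has] with x hx
    have hx0 : x ≠ 0 := ne_of_gt (hpos x hx).1
    have h := hcubic x hx
    have h2 : 2 * x ^ 4 * q x ^ 6 - x ^ 2 * (x ^ 2 + (4 * c + 2)) * q x ^ 4 + 1
        = 2 * x ^ 4 * (q x ^ 6 - ((x ^ 2 + 4 * c + 2) / (2 * x ^ 2)) * q x ^ 4
            + 1 / (2 * x ^ 4)) := by
      field_simp
      ring
    rw [h2, h, mul_zero]
  have hF0 : HasDerivAt
      (fun x => 2 * x ^ 4 * q x ^ 6 - x ^ 2 * (x ^ 2 + (4 * c + 2)) * q x ^ 4 + 1) 0 a :=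
    (hasDerivAt_const a (0:ℝ)).congr_of_eventuallyEq hFeq
  have hF : HasDerivAt
      (fun x => 2 * x ^ 4 * q x ^ 6 - x ^ 2 * (x ^ 2 + (4 * c + 2)) * q x ^ 4 + 1)
      ((2 * (4 * a ^ 3)) * q a ^ 6 + (2 * a ^ 4) * (6 * q a ^ 5 * q')
        - ((2 * a * (a ^ 2 + (4 * c + 2)) + a ^ 2 * (2 * a)) * q a ^ 4
          + (a ^ 2 * (a ^ 2 + (4 * c + 2))) * (4 * q a ^ 3 * q'))) a := by
    have h1 := (hx4.const_mul 2).fun_mul hq6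
    have h2 := (hx2.fun_mul (hx2.add_const (4 * c + 2))).fun_mul hq4
    have := (h1.fun_sub h2).add_const 1
    convert this using 1
    try ring
  have hD : (2 * (4 * a ^ 3)) * q a ^ 6 + (2 * a ^ 4) * (6 * q a ^ 5 * q')
      - ((2 * a * (a ^ 2 + (4 * c + 2)) + a ^ 2 * (2 * a)) * q a ^ 4
        + (a ^ 2 * (a ^ 2 + (4 * c + 2))) * (4 * q a ^ 3 * q')) = 0 :=
    hF.unique hF0
  -- solve for q'
  have hden : 2 * a * (a ^ 4 * q a ^ 6 - 1) ≠ 0 :=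
    mul_ne_zero (by positivity) (sub_ne_zero.mpr hne)
  have hp : q' = q a * (1 + a ^ 4 * q a ^ 4 - 2 * a ^ 4 * q a ^ 6)
      / (2 * a * (a ^ 4 * q a ^ 6 - 1)) := by
    rw [eq_div_iff hden]
    linear_combination (a * q a / 2) * hD - (q a + 2 * a * q') * hP
  -- derivatives of the pieces of G
  have hu : HasDerivAt (fun x => 1 + x ^ 2 * q x ^ 2)
      (2 * a * q a ^ 2 + a ^ 2 * (2 * q a * q')) a := (hx2.mul hq2).const_add 1
  have hL1 : HasDerivAt (fun x => Real.log (1 + x ^ 2 * q x ^ 2))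
      ((2 * a * q a ^ 2 + a ^ 2 * (2 * q a * q')) / (1 + a ^ 2 * q a ^ 2)) a :=
    hu.log (ne_of_gt h1u)
  have hx1 : HasDerivAt (fun x : ℝ => 2 * x) 2 a := by
    simpa using (hasDerivAt_id a).const_mul 2
  have hv : HasDerivAt (fun x => 2 * x * q x ^ 2)
      (2 * q a ^ 2 + 2 * a * (2 * q a * q')) a := hx1.mul hq2
  have hL2 : HasDerivAt (fun x => Real.log (2 * x * q x ^ 2))
      ((2 * q a ^ 2 + 2 * a * (2 * q a * q')) / (2 * a * q a ^ 2)) a :=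
    hv.log (by positivity)
  have hw : HasDerivAt (fun x => 1 + x ^ 2 * q x ^ 2 - 2 * x ^ 2 * q x ^ 4)
      ((2 * a * q a ^ 2 + a ^ 2 * (2 * q a * q'))
        - ((2 * (2 * a)) * q a ^ 4 + (2 * a ^ 2) * (4 * q a ^ 3 * q'))) a := by
    have := hu.fun_sub ((hx2.const_mul 2).fun_mul hq4)
    convert this using 1
    try ring
  have hL3 : HasDerivAt
      (fun x => Real.log (1 + x ^ 2 * q x ^ 2 - 2 * x ^ 2 * q x ^ 4))
      (((2 * a * q a ^ 2 + a ^ 2 * (2 * q a * q'))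
        - ((2 * (2 * a)) * q a ^ 4 + (2 * a ^ 2) * (4 * q a ^ 3 * q')))
        / (1 + a ^ 2 * q a ^ 2 - 2 * a ^ 2 * q a ^ 4)) a :=
    hw.log (ne_of_gt hW)
  have hb : HasDerivAt (fun x => x ^ 2 * q x ^ 2 / 2 - 1/2)
      ((2 * a * q a ^ 2 + a ^ 2 * (2 * q a * q')) / 2) a :=
    ((hx2.mul hq2).div_const 2).sub_const (1/2)
  -- the split-log version of G
  have hGt : HasDerivAt
      (fun x => x ^ 2 * q x ^ 2 / 2 - 1/2
        + (Real.log (1 + x ^ 2 * q x ^ 2) - Real.log (2 * x * q x ^ 2))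
        + c * (Real.log (1 + x ^ 2 * q x ^ 2)
            - Real.log (1 + x ^ 2 * q x ^ 2 - 2 * x ^ 2 * q x ^ 4)))
      ((2 * a * q a ^ 2 + a ^ 2 * (2 * q a * q')) / 2
        + ((2 * a * q a ^ 2 + a ^ 2 * (2 * q a * q')) / (1 + a ^ 2 * q a ^ 2)
          - (2 * q a ^ 2 + 2 * a * (2 * q a * q')) / (2 * a * q a ^ 2))
        + c * ((2 * a * q a ^ 2 + a ^ 2 * (2 * q a * q')) / (1 + a ^ 2 * q a ^ 2)
          - ((2 * a * q a ^ 2 + a ^ 2 * (2 * q a * q'))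
            - ((2 * (2 * a)) * q a ^ 4 + (2 * a ^ 2) * (4 * q a ^ 3 * q')))
            / (1 + a ^ 2 * q a ^ 2 - 2 * a ^ 2 * q a ^ 4))) a :=
    (hb.add (hL1.sub hL2)).add ((hL1.sub hL3).const_mul c)
  -- G agrees with the split-log version near a
  have heq : (fun x => x ^ 2 * q x ^ 2 / 2 - 1/2
        + Real.log ((1 + x ^ 2 * q x ^ 2) / (2 * x * q x ^ 2))
        + c * Real.log ((1 + x ^ 2 * q x ^ 2) / (1 + x ^ 2 * q x ^ 2 - 2 * x ^ 2 * q x ^ 4)))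
      =ᶠ[nhds a]
      (fun x => x ^ 2 * q x ^ 2 / 2 - 1/2
        + (Real.log (1 + x ^ 2 * q x ^ 2) - Real.log (2 * x * q x ^ 2))
        + c * (Real.log (1 + x ^ 2 * q x ^ 2)
            - Real.log (1 + x ^ 2 * q x ^ 2 - 2 * x ^ 2 * q x ^ 4))) := by
    filter_upwards [hs.mem_nhds has] with x hx
    obtain ⟨hx0, hqx0, _⟩ := hpos x hx
    have hwx := hlog x hx
    have h1 : (0:ℝ) < 1 + x ^ 2 * q x ^ 2 := by positivity
    have h2 : (0:ℝ) < 2 * x * q x ^ 2 := by positivity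
    rw [Real.log_div (ne_of_gt h1) (ne_of_gt h2),
        Real.log_div (ne_of_gt h1) (ne_of_gt hwx)]
  have hG : HasDerivAt
      (fun x => x ^ 2 * q x ^ 2 / 2 - 1/2
        + Real.log ((1 + x ^ 2 * q x ^ 2) / (2 * x * q x ^ 2))
        + c * Real.log ((1 + x ^ 2 * q x ^ 2) / (1 + x ^ 2 * q x ^ 2 - 2 * x ^ 2 * q x ^ 4)))
      ((2 * a * q a ^ 2 + a ^ 2 * (2 * q a * q')) / 2
        + ((2 * a * q a ^ 2 + a ^ 2 * (2 * q a * q')) / (1 + a ^ 2 * q a ^ 2)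
          - (2 * q a ^ 2 + 2 * a * (2 * q a * q')) / (2 * a * q a ^ 2))
        + c * ((2 * a * q a ^ 2 + a ^ 2 * (2 * q a * q')) / (1 + a ^ 2 * q a ^ 2)
          - ((2 * a * q a ^ 2 + a ^ 2 * (2 * q a * q'))
            - ((2 * (2 * a)) * q a ^ 4 + (2 * a ^ 2) * (4 * q a ^ 3 * q')))
            / (1 + a ^ 2 * q a ^ 2 - 2 * a ^ 2 * q a ^ 4))) a :=
    hGt.congr_of_eventuallyEq heq
  have hE : (2 * a * q a ^ 2 + a ^ 2 * (2 * q a * q')) / 2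
        + ((2 * a * q a ^ 2 + a ^ 2 * (2 * q a * q')) / (1 + a ^ 2 * q a ^ 2)
          - (2 * q a ^ 2 + 2 * a * (2 * q a * q')) / (2 * a * q a ^ 2))
        + c * ((2 * a * q a ^ 2 + a ^ 2 * (2 * q a * q')) / (1 + a ^ 2 * q a ^ 2)
          - ((2 * a * q a ^ 2 + a ^ 2 * (2 * q a * q'))
            - ((2 * (2 * a)) * q a ^ 4 + (2 * a ^ 2) * (4 * q a ^ 3 * q')))
            / (1 + a ^ 2 * q a ^ 2 - 2 * a ^ 2 * q a ^ 4))
      = a * q a ^ 2 := by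
    rw [hp, hc2]
    have hW' : 1 + a ^ 2 * q a ^ 2 - 2 * a ^ 2 * q a ^ 4 ≠ 0 := ne_of_gt hW
    have h1u' : (1:ℝ) + a ^ 2 * q a ^ 2 ≠ 0 := ne_of_gt h1u
    have hne' : a ^ 4 * q a ^ 6 - 1 ≠ 0 := sub_ne_zero.mpr hne
    field_simp
    ring
  exact hE ▸ hG
end

section
/- As a → ∞ with c > 0 fixed, the solution q(a) ∈ (0,1) of q⁶ - ((a²+4c+2)/(2a²))q⁴ + 1/(2a⁴) = 0 with aq < 1 satisfies q(a) = (1/a)(1 - c/a² + O(1/a⁴)). -/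
open Filter Asymptotics

/-- As `a → ∞` with `c > 0` fixed, the pre-critical solution `q(a) ∈ (0, 1/a)` of the cubic
`q⁶ - ((a²+4c+2)/(2a²)) q⁴ + 1/(2a⁴) = 0` satisfies `q(a) = (1/a)(1 - c/a² + O(1/a⁴))`,
i.e. `a·q(a) - 1 + c/a² = O(1/a⁴)`. -/
theorem q_asymptotics (c : ℝ) (hc : 0 < c) (q : ℝ → ℝ)
    (hq : ∀ᶠ a in atTop, 0 < q a ∧ a * q a < 1 ∧
      q a ^ 6 - ((a ^ 2 + 4 * c + 2) / (2 * a ^ 2)) * q a ^ 4 + 1 / (2 * a ^ 4) = 0) :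
    (fun a => a * q a - 1 + c / a ^ 2) =O[atTop] fun a => 1 / a ^ 4 := by
  rw [isBigO_iff]
  refine ⟨(10*c+4)*(4*c+2), ?_⟩
  filter_upwards [hq, eventually_ge_atTop (4*c+2)] with a ⟨hq0, hx1, heq⟩ ha
  have ha2 : (2:ℝ) ≤ a := by linarith
  have ha0 : (0:ℝ) < a := by linarith
  have hx0 : 0 < a * q a := mul_pos ha0 hq0
  set x := a * q a with hxdef
  have key : a^2 * (1 - x^4) = (4*c+2)*x^4 - 2*x^6 := by
    have h1 : a ≠ 0 := ne_of_gt ha0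
    field_simp at heq
    rw [hxdef]
    linear_combination a^2 * heq
  -- bound on 1 - x
  have hbd : a^2 * (1 - x) ≤ 4*c+2 := by
    nlinarith [key, sq_nonneg a, mul_nonneg (sq_nonneg a) (mul_nonneg (mul_nonneg hx0.le hx0.le) (sub_nonneg.2 hx1.le)), pow_nonneg hx0.le 6, pow_nonneg hx0.le 4,
      mul_nonneg (sq_nonneg a) (mul_nonneg hx0.le (mul_nonneg (sub_nonneg.2 hx1.le) (by positivity : (0:ℝ) ≤ 1 + x + x^2)))]
  set e := c - a^2*(1-x) with hedef
  have hED : e * ((1+x)*(1+x^2)) = c*(1+x)*(1+x^2) - (4*c+2)*x^4 + 2*x^6 := by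
    rw [hedef]; linear_combination -key
  have hD : 1 ≤ (1+x)*(1+x^2) := by nlinarith
  have h1x : 0 < 1 - x := by linarith
  have hNle : e * ((1+x)*(1+x^2)) ≤ (10*c+4)*(1-x) := by
    rw [hED]
    nlinarith [mul_nonneg (mul_nonneg hc.le h1x.le) hx0.le, mul_nonneg h1x.le (pow_nonneg hx0.le 4),
      mul_nonneg (mul_nonneg hc.le h1x.le) (pow_nonneg hx0.le 2),
      mul_nonneg (mul_nonneg hc.le h1x.le) (pow_nonneg hx0.le 3),
      mul_nonneg (mul_nonneg hc.le h1x.le) (pow_nonneg hx0.le 4),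
      mul_nonneg h1x.le (pow_nonneg hx0.le 5),
      mul_nonneg (mul_nonneg hc.le (mul_nonneg h1x.le h1x.le)) hx0.le]
  have hNge : -((10*c+4)*(1-x)) ≤ e * ((1+x)*(1+x^2)) := by
    rw [hED]
    nlinarith [mul_nonneg (mul_nonneg hc.le h1x.le) hx0.le, mul_nonneg h1x.le (pow_nonneg hx0.le 4),
      mul_nonneg (mul_nonneg hc.le h1x.le) (pow_nonneg hx0.le 2),
      mul_nonneg (mul_nonneg hc.le h1x.le) (pow_nonneg hx0.le 3),
      mul_nonneg (mul_nonneg hc.le h1x.le) (pow_nonneg hx0.le 4),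
      mul_nonneg h1x.le (pow_nonneg hx0.le 5),
      mul_nonneg (mul_nonneg hc.le (mul_nonneg h1x.le h1x.le)) hx0.le]
  have hL : 0 ≤ (10*c+4)*(1-x) := mul_nonneg (by linarith) h1x.le
  have habs : |e| ≤ (10*c+4)*(1-x) := by
    rw [abs_le]
    rcases le_or_gt 0 e with he | he
    · constructor
      · linarith
      · calc e = e * 1 := (mul_one e).symm
          _ ≤ e * ((1+x)*(1+x^2)) := mul_le_mul_of_nonneg_left hD he
          _ ≤ (10*c+4)*(1-x) := hNle
    · constructor
      · calc -((10*c+4)*(1-x)) ≤ e * ((1+x)*(1+x^2)) := hNge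
          _ ≤ e * 1 := mul_le_mul_of_nonpos_left hD he.le
          _ = e := mul_one e
      · linarith
  have h1xb : 1 - x ≤ (4*c+2)/a^2 := by
    rw [le_div_iff₀ (by positivity)]
    nlinarith [hbd]
  have habs2 : |e| ≤ (10*c+4)*(4*c+2)/a^2 := by
    calc |e| ≤ (10*c+4)*(1-x) := habs
      _ ≤ (10*c+4)*((4*c+2)/a^2) := by
          apply mul_le_mul_of_nonneg_left h1xb (by linarith)
      _ = (10*c+4)*(4*c+2)/a^2 := by ring
  have hgoal : x - 1 + c / a ^ 2 = e / a^2 := by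
    rw [hedef]; field_simp; ring
  rw [Real.norm_eq_abs, Real.norm_eq_abs, hgoal, abs_div,
    abs_of_pos (by positivity : (0:ℝ) < a^2),
    abs_of_pos (by positivity : (0:ℝ) < 1/a^4)]
  rw [div_le_iff₀ (by positivity)]
  calc |e| ≤ (10*c+4)*(4*c+2)/a^2 := habs2
    _ = (10*c+4)*(4*c+2) * (1/a^4) * a^2 := by field_simp
end

section
/- Let F(z) = (1/(2R))[z + |β| + √((z-β)(z-β̄))] with β = Rq - κ/q + 2i√(κR). Then as z → ∞, F(z) = z/R + κ/(Rq) + κ/z + O(1/z²); in particular R·F'(z) = 1 + O(1/z²) and F is the inverse of the conformal map f(w) = Rw - κ/(w-q) - κ/q near infinity, i.e. f(F(z)) = z for |z| large. -/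
open Filter Asymptotics Bornology

/-- Let `F(z) = (1/(2R))[z + |β| + √((z-β)(z-β̄))]` with `β = Rq - κ/q + 2i√(κR)`, the branch of
the square root chosen so that `√((z-β)(z-β̄)) ~ z` at infinity. Then as `z → ∞`,
`F(z) = z/R + κ/(Rq) + κ/z + O(1/z²)`, `R·F'(z) = 1 + O(1/z²)`, and `f(F(z)) = z` for `|z|`
large, where `f(w) = Rw - κ/(w-q) - κ/q`. -/
theorem F_inverse_asymptotics (R κ q : ℝ) (hR : 0 < R) (hκ : 0 < κ) (hq0 : 0 < q) (hq1 : q < 1)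
    (β : ℂ) (hβ : β = ((R * q - κ / q : ℝ) : ℂ) + 2 * Complex.I * (Real.sqrt (κ * R) : ℂ))
    (sq : ℂ → ℂ)
    (hsq : ∀ᶠ z in cobounded ℂ, (sq z) ^ 2 = (z - β) * (z - (starRingEnd ℂ) β))
    (hbr : Tendsto (fun z => sq z / z) (cobounded ℂ) (nhds 1))
    (hdiff : ∀ᶠ z in cobounded ℂ, DifferentiableAt ℂ sq z)
    (F f : ℂ → ℂ)
    (hF : ∀ z, F z = (1 / (2 * (R : ℂ))) * (z + (‖β‖ : ℂ) + sq z))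
    (hf : ∀ w, f w = (R : ℂ) * w - (κ : ℂ) / (w - (q : ℂ)) - (κ : ℂ) / (q : ℂ)) :
    ((fun z => F z - (z / (R : ℂ) + (κ : ℂ) / ((R : ℂ) * (q : ℂ)) + (κ : ℂ) / z))
        =O[cobounded ℂ] fun z => (z ^ 2)⁻¹) ∧
    ((fun z => (R : ℂ) * deriv F z - 1) =O[cobounded ℂ] fun z => (z ^ 2)⁻¹) ∧
    (∀ᶠ z in cobounded ℂ, f (F z) = z) := by
  have hRc : (R : ℂ) ≠ 0 := Complex.ofReal_ne_zero.2 hR.ne'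
  have hqc : (q : ℂ) ≠ 0 := Complex.ofReal_ne_zero.2 hq0.ne'
  have hprops : β + (starRingEnd ℂ) β = 2 * ((R * q - κ / q : ℝ) : ℂ) ∧
      β * (starRingEnd ℂ) β = ((R * q + κ / q : ℝ) : ℂ) ^ 2 ∧
      (‖β‖ : ℝ) = R * q + κ / q := by
    set s := Real.sqrt (κ * R) with hs_def
    have hs : s ^ 2 = κ * R := Real.sq_sqrt (by positivity)
    have hre : β.re = R * q - κ / q := by simp [hβ]
    have him : β.im = 2 * s := by simp [hβ]
    have hb : (0:ℝ) ≤ R * q + κ / q := by positivity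
    have hnsq : Complex.normSq β = (R * q + κ / q) ^ 2 := by
      rw [Complex.normSq_apply, hre, him]
      field_simp
      linear_combination (4 * q ^ 2) * hs
    refine ⟨?_, ?_, ?_⟩
    · rw [Complex.add_conj, hre]; push_cast; ring
    · rw [Complex.mul_conj, hnsq]; push_cast; ring
    · rw [Complex.norm_def, hnsq, Real.sqrt_sq hb]
  set A : ℂ := ((R * q - κ / q : ℝ) : ℂ) with hA_def
  set B : ℂ := ((R * q + κ / q : ℝ) : ℂ) with hB_def
  obtain ⟨hsum, hprod, habs⟩ := hprops
  have habsC : (‖β‖ : ℂ) = B := by rw [habs, hB_def]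
  have hBA : B ^ 2 - A ^ 2 = 4 * (κ : ℂ) * (R : ℂ) := by
    rw [hA_def, hB_def]; push_cast; field_simp; ring
  have hq2 : B = A + 2 * (κ:ℂ) / (q:ℂ) := by
    rw [hA_def, hB_def]; push_cast; field_simp; ring
  have hsq' : ∀ᶠ z in cobounded ℂ, sq z ^ 2 = z ^ 2 - 2 * A * z + B ^ 2 := by
    filter_upwards [hsq] with z hz
    rw [hz]; linear_combination (-z) * hsum + hprod
  have hrat : ∀ᶠ z in cobounded ℂ, ‖sq z / z - 1‖ ≤ 1/4 := by
    have := Metric.tendsto_nhds.1 hbr (1/4) (by norm_num)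
    filter_upwards [this] with z hz
    rw [Complex.dist_eq] at hz
    exact le_of_lt hz
  obtain ⟨r₀, -, hr₀⟩ := (Filter.hasBasis_cobounded_norm.eventually_iff).1
    ((hsq'.and hdiff).and hrat)
  set M : ℝ := max (r₀ + 1) (max 1 (2 * ‖A‖ + 1)) with hM_def
  have hMr : r₀ < M := lt_of_lt_of_le (by linarith) (le_max_left _ _)
  have hM1 : (1:ℝ) ≤ M := le_trans (le_max_left _ _) (le_max_right _ _)
  have hMA : 2 * ‖A‖ < M :=
    lt_of_lt_of_le (by linarith) (le_trans (le_max_right _ _) (le_max_right _ _))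
  have key : ∀ z : ℂ, M ≤ ‖z‖ →
      sq z ^ 2 = z ^ 2 - 2 * A * z + B ^ 2 ∧ DifferentiableAt ℂ sq z ∧
      z ≠ 0 ∧ (1:ℝ) ≤ ‖z‖ ∧ ‖z‖ / 2 ≤ ‖sq z‖ ∧ sq z ≠ 0 ∧
      ‖z‖ ≤ ‖z - A + sq z‖ ∧ z - A + sq z ≠ 0 := by
    intro z hz
    have hzr : r₀ ≤ ‖z‖ := le_trans hMr.le hz
    obtain ⟨⟨hE1, hd⟩, hg⟩ := hr₀ hzr
    have hz1 : (1:ℝ) ≤ ‖z‖ := le_trans hM1 hz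
    have hz0 : z ≠ 0 := by intro h; rw [h, norm_zero] at hz1; linarith
    have hgn : (3/4 : ℝ) ≤ ‖sq z / z‖ := by
      have h1 : ‖(1:ℂ)‖ - ‖sq z / z‖ ≤ ‖1 - sq z / z‖ := norm_sub_norm_le _ _
      rw [norm_one, norm_sub_rev] at h1
      linarith
    have hsqn : ‖z‖ / 2 ≤ ‖sq z‖ := by
      have h0 : sq z = (sq z / z) * z := (div_mul_cancel₀ _ hz0).symm
      rw [h0, norm_mul]
      nlinarith [norm_nonneg z]
    have hsq0 : sq z ≠ 0 := by
      intro h; rw [h, norm_zero] at hsqn; linarith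
    have hSn : ‖z‖ ≤ ‖z - A + sq z‖ := by
      have h1 : (7/4 : ℝ) ≤ ‖1 + sq z / z‖ := by
        have h2 : ‖(2:ℂ)‖ - ‖1 - sq z / z‖ ≤ ‖2 - (1 - sq z / z)‖ := norm_sub_norm_le _ _
        have h3 : (2:ℂ) - (1 - sq z / z) = 1 + sq z / z := by ring
        have h4 : ‖(2:ℂ)‖ = 2 := by norm_num
        have h9 : ‖1 - sq z / z‖ = ‖sq z / z - 1‖ := norm_sub_rev _ _
        rw [h3, h4, h9] at h2
        linarith
      have h5 : z + sq z = z * (1 + sq z / z) := by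
        rw [mul_add, mul_one, mul_div_cancel₀ _ hz0]
      have h6 : (7/4 : ℝ) * ‖z‖ ≤ ‖z + sq z‖ := by
        rw [h5, norm_mul]
        nlinarith [norm_nonneg z]
      have h7 : ‖z + sq z‖ - ‖A‖ ≤ ‖(z + sq z) - A‖ := norm_sub_norm_le _ _
      have h8 : (z + sq z) - A = z - A + sq z := by ring
      rw [h8] at h7
      have hAz : 2 * ‖A‖ ≤ ‖z‖ := le_trans hMA.le hz
      linarith
    have hS0 : z - A + sq z ≠ 0 := by
      intro h; rw [h, norm_zero] at hSn; linarith
    exact ⟨hE1, hd, hz0, hz1, hsqn, hsq0, hSn, hS0⟩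
  have keyalg : ∀ z : ℂ, M ≤ ‖z‖ →
      sq z = z - A + (4 * (κ:ℂ) * (R:ℂ)) / (z - A + sq z) := by
    intro z hz
    obtain ⟨hE1, -, -, -, -, -, -, hS0⟩ := key z hz
    have h3 : (sq z - (z - A)) * (z - A + sq z) = 4 * (κ:ℂ) * (R:ℂ) := by
      linear_combination hE1 + hBA
    field_simp [hS0]
    linear_combination h3
  have hMev : ∀ᶠ z in cobounded ℂ, M ≤ ‖z‖ := eventually_cobounded_le_norm M
  refine ⟨?_, ?_, ?_⟩
  · rw [isBigO_iff]
    refine ⟨κ * (2 * ‖A‖ + 4 * κ * R), ?_⟩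
    filter_upwards [hMev] with z hz
    obtain ⟨hE1, -, hz0, hz1, hsqn, hsq0, hSn, hS0⟩ := key z hz
    have hsq4 := keyalg z hz
    set S : ℂ := z - A + sq z with hSdef
    clear_value S
    have hFz : F z = z / (R:ℂ) + (κ:ℂ) / ((R:ℂ) * (q:ℂ)) + 2 * (κ:ℂ) / S := by
      rw [hF z, habsC, hq2, hsq4]
      field_simp
      ring
    have e1 : F z - (z / (R : ℂ) + (κ : ℂ) / ((R : ℂ) * (q : ℂ)) + (κ : ℂ) / z)
        = (2 * (κ:ℂ) * z - S * (κ:ℂ)) / (S * z) := by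
      rw [hFz, show z / (R:ℂ) + (κ:ℂ) / ((R:ℂ) * (q:ℂ)) + 2 * (κ:ℂ) / S
          - (z / (R:ℂ) + (κ:ℂ) / ((R:ℂ) * (q:ℂ)) + (κ:ℂ) / z)
          = 2 * (κ:ℂ) / S - (κ:ℂ) / z from by ring]
      exact div_sub_div _ _ hS0 hz0
    have hbnd : ‖2 * z - S‖ ≤ 2 * ‖A‖ + 4 * κ * R := by
      have h1 : 2 * z - S = 2 * A - (4 * (κ:ℂ) * (R:ℂ)) / S := by
        linear_combination -hSdef - hsq4
      rw [h1]
      refine le_trans (norm_sub_le _ _) ?_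
      have h2 : ‖2 * A‖ = 2 * ‖A‖ := by simp
      have h3 : ‖(4 * (κ:ℂ) * (R:ℂ)) / S‖ ≤ 4 * κ * R := by
        rw [norm_div]
        have h4 : ‖4 * (κ:ℂ) * (R:ℂ)‖ = 4 * κ * R := by
          simp [norm_mul, abs_of_pos hκ, abs_of_pos hR]
        rw [h4]
        have h5 : (1:ℝ) ≤ ‖S‖ := le_trans hz1 hSn
        calc 4 * κ * R / ‖S‖ ≤ 4 * κ * R / 1 :=
              div_le_div_of_nonneg_left (by positivity) (by norm_num) h5
          _ = 4 * κ * R := by ring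
      rw [h2]
      linarith
    rw [e1, show 2 * (κ:ℂ) * z - S * (κ:ℂ) = (κ:ℂ) * (2 * z - S) from by ring,
      norm_div, norm_mul]
    have hden : ‖z‖^2 ≤ ‖S * z‖ := by
      rw [norm_mul, pow_two]
      exact mul_le_mul_of_nonneg_right hSn (norm_nonneg z)
    have hzpos : (0:ℝ) < ‖z‖ := lt_of_lt_of_le one_pos hz1
    have hκn : ‖(κ:ℂ)‖ = κ := by simp [abs_of_pos hκ]
    calc ‖(κ:ℂ)‖ * ‖2 * z - S‖ / ‖S * z‖
        ≤ κ * (2 * ‖A‖ + 4 * κ * R) / ‖z‖^2 := by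
          apply div_le_div₀ (by positivity) ?_ (by positivity) hden
          rw [hκn]
          exact mul_le_mul_of_nonneg_left hbnd hκ.le
      _ = κ * (2 * ‖A‖ + 4 * κ * R) * ‖(z^2)⁻¹‖ := by
          rw [norm_inv, norm_pow]; ring
  · rw [isBigO_iff]
    refine ⟨4 * κ * R, ?_⟩
    filter_upwards [hMev] with z hz
    obtain ⟨hE1, hd, hz0, hz1, hsqn, hsq0, hSn, hS0⟩ := key z hz
    have hopen : IsOpen {w : ℂ | r₀ < ‖w‖} := isOpen_lt continuous_const continuous_norm
    have hmem : z ∈ {w : ℂ | r₀ < ‖w‖} := lt_of_lt_of_le hMr hz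
    have hloc : (fun w => sq w ^ 2) =ᶠ[nhds z] (fun w => w ^ 2 - 2 * A * w + B ^ 2) := by
      filter_upwards [hopen.mem_nhds hmem] with w hw
      exact ((hr₀ (le_of_lt hw)).1).1
    have hderL : HasDerivAt (fun w => sq w ^ 2) ((2:ℕ) * sq z ^ 1 * deriv sq z) z :=
      (hd.hasDerivAt).pow 2
    have hderR : HasDerivAt (fun w : ℂ => w ^ 2 - 2 * A * w + B ^ 2)
        ((2:ℕ) * z ^ 1 - 2 * A) z := by
      have h1 : HasDerivAt (fun w : ℂ => w ^ 2) ((2:ℕ) * z ^ 1) z := hasDerivAt_pow 2 z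
      have h2 : HasDerivAt (fun w : ℂ => 2 * A * w) (2 * A) z := by
        simpa using (hasDerivAt_id z).const_mul (2 * A)
      simpa using (h1.sub h2).add_const (B ^ 2)
    have hderiveq : ((2:ℕ) : ℂ) * sq z ^ 1 * deriv sq z = ((2:ℕ) : ℂ) * z ^ 1 - 2 * A := by
      rw [← hderL.deriv, ← hderR.deriv]
      exact hloc.deriv_eq
    have hd1 : deriv sq z = (z - A) / sq z := by
      rw [eq_div_iff hsq0]
      push_cast at hderiveq
      simp only [pow_one] at hderiveq
      linear_combination hderiveq / 2
    have hFd : deriv F z = (1 / (2 * (R:ℂ))) * (1 + deriv sq z) := by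
      have hFfun : F = fun w => (1 / (2 * (R : ℂ))) * (w + (‖β‖ : ℂ) + sq w) :=
        funext hF
      rw [hFfun]
      have hder : HasDerivAt (fun w => (1 / (2 * (R : ℂ))) * (w + (‖β‖ : ℂ) + sq w))
          ((1 / (2 * (R:ℂ))) * (1 + deriv sq z)) z := by
        have h1 : HasDerivAt (fun w : ℂ => w + (‖β‖ : ℂ) + sq w)
            (1 + deriv sq z) z := ((hasDerivAt_id z).add_const _).add hd.hasDerivAt
        exact h1.const_mul _
      exact hder.deriv
    have e2a : (R:ℂ) * deriv F z - 1 = (z - A - sq z) / (2 * sq z) := by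
      rw [hFd, hd1]
      field_simp [hsq0, hRc]
      ring
    have h4 : z - A - sq z = -(4 * (κ:ℂ) * (R:ℂ)) / (z - A + sq z) := by
      rw [eq_div_iff hS0]
      linear_combination -hE1 - hBA
    have e2b : (R:ℂ) * deriv F z - 1 = -(2 * (κ:ℂ) * (R:ℂ)) / ((z - A + sq z) * sq z) := by
      rw [e2a, h4]
      field_simp [hsq0, hS0]
      ring
    rw [e2b, norm_div]
    have hnum : ‖-(2 * (κ:ℂ) * (R:ℂ))‖ = 2 * κ * R := by
      simp [norm_mul, abs_of_pos hκ, abs_of_pos hR]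
    have hden : ‖z‖ * (‖z‖/2) ≤ ‖(z - A + sq z) * sq z‖ := by
      rw [norm_mul]
      exact mul_le_mul hSn hsqn (by positivity) (norm_nonneg _)
    have hzpos : (0:ℝ) < ‖z‖ := lt_of_lt_of_le one_pos hz1
    calc ‖-(2 * (κ:ℂ) * (R:ℂ))‖ / ‖(z - A + sq z) * sq z‖
        ≤ (2 * κ * R) / (‖z‖ * (‖z‖/2)) := by
          rw [hnum]
          apply div_le_div₀ (by positivity) le_rfl (by positivity) hden
      _ = (4 * κ * R) * ‖(z^2)⁻¹‖ := by
          rw [norm_inv, norm_pow, ← div_eq_mul_inv,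
            show ‖z‖ * (‖z‖/2) = ‖z‖^2/2 by ring, div_div_eq_mul_div]
          ring
  · filter_upwards [hMev] with z hz
    obtain ⟨hE1, -, hz0, hz1, hsqn, hsq0, hSn, hS0⟩ := key z hz
    have hsq4 := keyalg z hz
    set S : ℂ := z - A + sq z with hSdef
    clear_value S
    have hq3 : A + B = 2 * (R:ℂ) * (q:ℂ) := by
      rw [hA_def, hB_def]; push_cast; field_simp; ring
    have hsq5 : sq z = S - z + A := by linear_combination -hSdef
    have hFq : F z - (q:ℂ) = S / (2 * (R:ℂ)) := by
      rw [hF z, habsC, hsq5]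
      field_simp
      linear_combination hq3
    have hhalf : ∀ Y : ℂ, (R:ℂ) * (1 / (2 * (R:ℂ)) * Y) = Y / 2 := fun Y => by
      field_simp
    have hdd : (κ:ℂ) / (S / (2 * (R:ℂ))) = 2 * (R:ℂ) * (κ:ℂ) / S := by
      rw [div_div_eq_mul_div]; ring
    rw [hf (F z), hFq, hF z, habsC, hq2, hsq4, hhalf, hdd]
    ring
end
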